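/- arXiv:1308.2677 — 2 statements merged into one kernel-verified Lean document; each statement's English description precedes it below -/
import Mathlib

section
/- Rotor-routing preserves unicycles: if (ρ, v) is a unicycle on a ribbon graph G (ρ a rotor configuration with exactly one directed cycle C(ρ), and v a vertex on C(ρ)), then applying one step of the rotor-routing process yields another unicycle. -/
/-- A ribbon graph: a finite connected multigraph without self-loops, presented
by darts (directed half-edges), together with a cyclic ordering `next` of the
darts based at each vertex. -/
structure RibbonGraph where
  V : Type
  D : Type
  fV : Fintype V
  dV : DecidableEq V
  fD : Fintype D
  dD : DecidableEq D
  nV : Nonempty V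
  src : D → V
  rev : D → D
  rev_rev : ∀ d, rev (rev d) = d
  no_loop : ∀ d, src (rev d) ≠ src d
  next : Equiv.Perm D
  src_next : ∀ d, src (next d) = src d
  next_cyclic : ∀ d e, src d = src e → ∃ n : ℕ, (⇑next)^[n] d = e
  conn : ∀ u v : V,
    Relation.ReflTransGen (fun a b => ∃ d, src d = a ∧ src (rev d) = b) u v

attribute [instance] RibbonGraph.fV RibbonGraph.dV RibbonGraph.fD RibbonGraph.dD

namespace RibbonGraph

variable (G : RibbonGraph)

/-- The endpoint of a dart. -/
def tgt (d : G.D) : G.V := G.src (G.rev d)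

/-- A rotor configuration: an outgoing dart at every vertex. -/
def RotorConfig := {ρ : G.V → G.D // ∀ v, G.src (ρ v) = v}

/-- One step of the rotor-routing process: advance the rotor at the chip's
position to the next dart in the cyclic order, then move the chip along it. -/
def rrStep (p : G.RotorConfig × G.V) : G.RotorConfig × G.V :=
  (⟨fun v => if v = p.2 then G.next (p.1.1 p.2) else p.1.1 v, by
      intro v
      simp only []
      by_cases h : v = p.2
      · rw [if_pos h, G.src_next, p.1.2, h]
      · rw [if_neg h]
        exact p.1.2 v⟩,
    G.tgt (G.next (p.1.1 p.2)))

/-- The functional graph of a rotor configuration: follow the rotor. -/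
def cfgStep (ρ : G.RotorConfig) (v : G.V) : G.V := G.tgt (ρ.1 v)

/-- A vertex is periodic (lies on a directed cycle of the rotor configuration). -/
def Periodic (ρ : G.RotorConfig) (v : G.V) : Prop :=
  ∃ n : ℕ, 0 < n ∧ (G.cfgStep ρ)^[n] v = v

/-- A unicycle: a rotor configuration with exactly one directed cycle, together
with a chip position on that cycle. -/
def Unicycle (p : G.RotorConfig × G.V) : Prop :=
  G.Periodic p.1 p.2 ∧
    ∀ u w, G.Periodic p.1 u → G.Periodic p.1 w → ∃ n : ℕ, (G.cfgStep p.1)^[n] u = w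

/-- `(σ, y)` is reachable from `(ρ, x)` by a positive number of rotor-routing steps. -/
def Reaches (p q : G.RotorConfig × G.V) : Prop :=
  ∃ n : ℕ, 0 < n ∧ (G.rrStep)^[n] p = q

/-- `σ` is obtained from `ρ` by reversing the directed cycle(s) of `ρ` and keeping
all other rotors: off the cycle the rotors agree, and the rotor of `σ` at the head
of a cycle dart of `ρ` is that dart reversed. -/
def IsReversal (ρ σ : G.RotorConfig) : Prop :=
  (∀ v, ¬ G.Periodic ρ v → σ.1 v = ρ.1 v) ∧
  (∀ v, G.Periodic ρ v → σ.1 (G.tgt (ρ.1 v)) = G.rev (ρ.1 v))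

/-- Two rotor configurations have the same directed cycle. -/
def SameCycle (ρ τ : G.RotorConfig) : Prop :=
  ∀ v, (G.Periodic ρ v ↔ G.Periodic τ v) ∧ (G.Periodic ρ v → ρ.1 v = τ.1 v)

/-- The directed cycle of `ρ` is reversible: from any unicycle whose rotor
configuration has the same directed cycle, the reversed state is reachable. -/
def CycleReversible (ρ : G.RotorConfig) : Prop :=
  ∀ τ v σ, G.SameCycle ρ τ → G.Periodic τ v → G.IsReversal τ σ →
    G.Reaches (τ, v) (σ, v)

/-- A directed cycle in a ribbon graph: a cyclically closed, vertex-injective,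
nonempty list of darts. -/
structure DirCycle where
  darts : List G.D
  ne : darts ≠ []
  chain : darts.Chain' (fun a b => G.tgt a = G.src b)
  wrap : G.tgt (darts.getLast ne) = G.src (darts.head ne)
  nodupV : (darts.map G.src).Nodup

/-- The vertices of a directed cycle. -/
def cverts (C : G.DirCycle) : List G.V := C.darts.map G.src

/-- A dart `e` based at a vertex of `C` lies on the right of `C`: it occurs
strictly after the outgoing dart of `C` and strictly before the reversed
incoming dart of `C` in the cyclic order at its base vertex. -/
def RightOf (C : G.DirCycle) (e : G.D) : Prop :=
  ∃ dout ∈ C.darts, ∃ din ∈ C.darts,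
    G.src dout = G.src e ∧ G.tgt din = G.src e ∧
    ∃ k j : ℕ, 0 < k ∧ k < j ∧ (⇑G.next)^[k] dout = e ∧ (⇑G.next)^[j] dout = G.rev din ∧
      ∀ j', 0 < j' → j' < j → (⇑G.next)^[j'] dout ≠ G.rev din

/-- A dart `e` based at a vertex of `C` lies on the left of `C`: it occurs
strictly after the reversed incoming dart of `C` and strictly before the
outgoing dart of `C` in the cyclic order at its base vertex. -/
def LeftOf (C : G.DirCycle) (e : G.D) : Prop :=
  ∃ dout ∈ C.darts, ∃ din ∈ C.darts,
    G.src dout = G.src e ∧ G.tgt din = G.src e ∧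
    ∃ k j : ℕ, 0 < k ∧ k < j ∧ (⇑G.next)^[k] (G.rev din) = e ∧ (⇑G.next)^[j] (G.rev din) = dout ∧
      ∀ j', 0 < j' → j' < j → (⇑G.next)^[j'] (G.rev din) ≠ dout

/-- A path witnessing that the cycle `C` is nonseparating: an edge-injective path
whose endpoints lie on `C`, which is otherwise disjoint from `C`, whose first
edge is on the left of `C` and whose last edge is on the right of `C`. -/
def IsWitness (C : G.DirCycle) (p : List G.D) : Prop :=
  ∃ hp : p ≠ [],
    p.Chain' (fun a b => G.tgt a = G.src b) ∧
    G.src (p.head hp) ∈ G.cverts C ∧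
    G.tgt (p.getLast hp) ∈ G.cverts C ∧
    (∀ i : Fin p.length, i.1 ≠ 0 → G.src (p.get i) ∉ G.cverts C) ∧
    (∀ i j : Fin p.length, i ≠ j → p.get i ≠ p.get j ∧ p.get i ≠ G.rev (p.get j)) ∧
    G.LeftOf C (p.head hp) ∧
    G.RightOf C (G.rev (p.getLast hp))

/-- The cycle `C` is separating (no witness to the contrary exists). -/
def Separating (C : G.DirCycle) : Prop := ∀ p : List G.D, ¬ G.IsWitness C p

/-- The ribbon graph is planar: every cycle is separating. -/
def Planar : Prop := ∀ C : G.DirCycle, G.Separating C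

/-- `C` is the unique directed cycle of the rotor configuration `ρ`. -/
def IsCycleOf (ρ : G.RotorConfig) (C : G.DirCycle) : Prop :=
  (∀ d ∈ C.darts, ρ.1 (G.src d) = d) ∧ (∀ v, G.Periodic ρ v → v ∈ G.cverts C)

/-- The cycle `C` is reversible: from any unicycle whose unique directed cycle is
`C` and whose chip lies on `C`, the state with `C` reversed is reachable by
rotor-routing. -/
def Reversible (C : G.DirCycle) : Prop :=
  ∀ (ρ : G.RotorConfig) (v : G.V) (σ : G.RotorConfig),
    G.IsCycleOf ρ C → v ∈ G.cverts C → G.IsReversal ρ σ → G.Reaches (ρ, v) (σ, v)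

/-- A spanning tree of a ribbon graph: a `rev`-closed set of darts that connects
all vertices and has the dart count of a tree. -/
structure SpanningTree where
  edges : Finset G.D
  rev_mem : ∀ d ∈ edges, G.rev d ∈ edges
  conn : ∀ u v : G.V,
    Relation.ReflTransGen (fun a b => ∃ d ∈ edges, G.src d = a ∧ G.tgt d = b) u v
  card_eq : edges.card = 2 * (Fintype.card G.V - 1)

/-- `ρ` orients the spanning tree `T` toward the root `r`: away from `r` the
rotors are tree darts, and following the rotors from any vertex reaches `r`. -/
def TowardRoot (T : G.SpanningTree) (r : G.V) (ρ : G.RotorConfig) : Prop :=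
  (∀ v, v ≠ r → ρ.1 v ∈ T.edges) ∧ (∀ v, ∃ n : ℕ, (G.cfgStep ρ)^[n] v = r)

/-- The rotor-routing action of the divisor `v - r` with basepoint `r` sends the
spanning tree `T` to `T'`: orient `T` toward `r`, place the chip at `v`, iterate
rotor-routing until the chip first reaches `r`, and read off the resulting
spanning tree oriented toward `r`.  (The rotor at `r` itself is irrelevant: the
chip is never routed from `r`.) -/
def RRAct (r v : G.V) (T T' : G.SpanningTree) : Prop :=
  ∃ ρ : G.RotorConfig, G.TowardRoot T r ρ ∧
    ∃ n : ℕ, (∀ k, k < n → ((G.rrStep)^[k] (ρ, v)).2 ≠ r) ∧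
      ((G.rrStep)^[n] (ρ, v)).2 = r ∧
      G.TowardRoot T' r ((G.rrStep)^[n] (ρ, v)).1

/-- The divisor `v - r` as a function on vertices. -/
def genDiv (v r : G.V) : G.V → ℤ :=
  fun w => (if w = v then (1 : ℤ) else 0) - (if w = r then 1 else 0)

/-- The rotor-routing action of an arbitrary divisor `D ∈ Div⁰(G)` with basepoint
`r` on spanning trees, generated by the actions of the divisors `v - r` and
their inverses. -/
inductive DivAct (r : G.V) : (G.V → ℤ) → G.SpanningTree → G.SpanningTree → Prop
  | zero (T : G.SpanningTree) : DivAct r 0 T T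
  | step (v : G.V) (D : G.V → ℤ) (T T' T'' : G.SpanningTree) :
      DivAct r D T T' → G.RRAct r v T' T'' → DivAct r (D + G.genDiv v r) T T''
  | inv (v : G.V) (D : G.V → ℤ) (T T' T'' : G.SpanningTree) :
      DivAct r D T T' → G.RRAct r v T'' T' → DivAct r (D - G.genDiv v r) T T''

end RibbonGraph

/-!
In a finite functional graph, `(ρ, x)` is a unicycle exactly when `x` is periodic and every
vertex reaches `x` by following rotors. One step of rotor-routing changes the rotor at `x`
only, and a rotor path reaching `x` never needs the rotor at `x`, so every vertex still
reaches `x` afterwards. Hence `x`, and with it its new successor (the new chip position),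
lies on the cycle of the new configuration.
-/

namespace Function

variable {α : Type*} {f g : α → α} {x w : α}

variable (f) in
theorem exists_iterate_mem_periodicPts [Finite α] (v : α) :
    ∃ n, f^[n] v ∈ periodicPts f := by
  obtain ⟨a, b, hab, heq⟩ := Finite.exists_ne_map_eq_of_infinite (fun n : ℕ => f^[n] v)
  wlog hlt : a < b generalizing a b
  · exact this b a hab.symm heq.symm (by omega)
  refine ⟨a, mk_mem_periodicPts (Nat.sub_pos_of_lt hlt) ?_⟩
  change f^[b - a] (f^[a] v) = f^[a] v
  rw [← iterate_add_apply, Nat.sub_add_cancel hlt.le, ← heq]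

theorem exists_iterate_eq_of_iterate_eq_of_mem_periodicPts (hw : w ∈ periodicPts f) {b : ℕ}
    (hb : f^[b] w = x) : ∃ m, f^[m] x = w := by
  obtain ⟨n, hn, hper⟩ := mem_periodicPts.mp hw
  refine ⟨n * b - b, ?_⟩
  rw [← hb, ← iterate_add_apply, Nat.sub_add_cancel (Nat.le_mul_of_pos_left b hn)]
  exact hper.mul_const b

theorem exists_iterate_eq_of_forall_ne_eq (hfg : ∀ v ≠ x, g v = f v) {n : ℕ} {v : α}
    (h : f^[n] v = x) : ∃ m, g^[m] v = x := by
  induction n generalizing v with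
  | zero => exact ⟨0, h⟩
  | succ n ih =>
    by_cases hv : v = x
    · exact ⟨0, hv⟩
    obtain ⟨m, hm⟩ := ih (v := f v) h
    exact ⟨m + 1, by rwa [iterate_succ_apply, hfg v hv]⟩

theorem mem_periodicPts_of_forall_exists_iterate_eq (h : ∀ v, ∃ n, f^[n] v = x) :
    x ∈ periodicPts f := by
  obtain ⟨n, hn⟩ := h (f x)
  exact mk_mem_periodicPts n.succ_pos hn

end Function

open Function

namespace RibbonGraph

variable (G : RibbonGraph)

theorem periodic_iff_mem_periodicPts {ρ : G.RotorConfig} {v : G.V} :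
    G.Periodic ρ v ↔ v ∈ periodicPts (G.cfgStep ρ) :=
  Iff.rfl

theorem cfgStep_rrStep_of_ne (p : G.RotorConfig × G.V) {v : G.V} (hv : v ≠ p.2) :
    G.cfgStep (G.rrStep p).1 v = G.cfgStep p.1 v := by
  simp [cfgStep, rrStep, hv]

theorem cfgStep_rrStep_self (p : G.RotorConfig × G.V) :
    G.cfgStep (G.rrStep p).1 p.2 = (G.rrStep p).2 := by
  simp [cfgStep, rrStep]

variable {G}

theorem Unicycle.exists_iterate_eq {p : G.RotorConfig × G.V} (hp : G.Unicycle p) (v : G.V) :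
    ∃ n, (G.cfgStep p.1)^[n] v = p.2 := by
  obtain ⟨a, ha⟩ := exists_iterate_mem_periodicPts (G.cfgStep p.1) v
  obtain ⟨b, hb⟩ := hp.2 _ _ ha hp.1
  exact ⟨b + a, by rw [iterate_add_apply, hb]⟩

theorem unicycle_of_forall_exists_iterate_eq {p : G.RotorConfig × G.V} {x : G.V}
    (hx : ∀ v, ∃ n, (G.cfgStep p.1)^[n] v = x) (hp : G.Periodic p.1 p.2) : G.Unicycle p := by
  refine ⟨hp, fun u w _ hw => ?_⟩
  obtain ⟨a, ha⟩ := hx u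
  obtain ⟨b, hb⟩ := hx w
  obtain ⟨c, hc⟩ := exists_iterate_eq_of_iterate_eq_of_mem_periodicPts hw hb
  exact ⟨c + a, by rw [iterate_add_apply, ha, hc]⟩

end RibbonGraph

/-- one step of the rotor-routing process takes unicycles to unicycles. -/
theorem rrStep_unicycle (G : RibbonGraph) (p : G.RotorConfig × G.V)
    (hp : G.Unicycle p) : G.Unicycle (G.rrStep p) := by
  have hreach : ∀ v, ∃ n, (G.cfgStep (G.rrStep p).1)^[n] v = p.2 := fun v => by
    obtain ⟨n, hn⟩ := hp.exists_iterate_eq v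
    exact exists_iterate_eq_of_forall_ne_eq (fun _ hv => G.cfgStep_rrStep_of_ne p hv) hn
  have hchip : p.2 ∈ periodicPts (G.cfgStep (G.rrStep p).1) :=
    mem_periodicPts_of_forall_exists_iterate_eq hreach
  refine RibbonGraph.unicycle_of_forall_exists_iterate_eq hreach ?_
  rw [G.periodic_iff_mem_periodicPts, ← G.cfgStep_rrStep_self]
  exact (bijOn_periodicPts _).mapsTo hchip
end

section
/- Let (ρ, x) be a unicycle on a ribbon graph G. For every vertex y and every directed edge e based at y, there exists a unique rotor configuration σ such that (σ, y) is reachable from (ρ, x) by rotor-routing and σ[y] = e. -/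
/-!
Let `t` be the first time the chip is about to leave a vertex whose rotor has already made a full
turn. Before `t` no dart is used twice, so no vertex is entered more than `deg` times; hence the
chip is back at its starting vertex `x` at time `t`, and the rotor at `x` has made a full turn.
If the rotor at `w` has not made a full turn by time `t`, the initial rotor at `w` is still unused,
so its head has an unused incoming dart and has not made a full turn either. Following the initial
rotors leads from every vertex to `x`, so every rotor has made exactly one full turn: `t = |D|` and
the state returns after `|D|` steps. Within this period the rotor at `y` runs exactly once through
the darts at `y`, one per visit of the chip, which gives existence and uniqueness of `σ`.
-/

open Finset Function

namespace RibbonGraph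

variable (G : RibbonGraph)

def deg (u : G.V) : ℕ := #(univ.filter fun d => G.src d = u)

lemma sum_deg : ∑ u, G.deg u = Fintype.card G.D :=
  (card_eq_sum_card_fiberwise fun d _ => mem_univ (G.src d)).symm

lemma card_filter_tgt_eq_deg (u : G.V) : #(univ.filter fun d => G.tgt d = u) = G.deg u := by
  refine card_bij (fun d _ => G.rev d) (fun d hd => ?_) (fun a _ b _ h => ?_) (fun d hd => ?_)
  · exact mem_filter.2 ⟨mem_univ _, (mem_filter.1 hd).2⟩
  · simpa [G.rev_rev] using congrArg G.rev h
  · refine ⟨G.rev d, ?_, G.rev_rev d⟩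
    rw [mem_filter, tgt, G.rev_rev]
    exact ⟨mem_univ _, (mem_filter.1 hd).2⟩

lemma src_iterate_next (n : ℕ) (d : G.D) : G.src (G.next^[n] d) = G.src d := by
  induction n with
  | zero => rfl
  | succ n ih => rw [iterate_succ_apply', G.src_next, ih]

lemma mem_periodicPts_next (d : G.D) : d ∈ periodicPts G.next :=
  G.next.injective.mem_periodicPts d

lemma minimalPeriod_next (d : G.D) : minimalPeriod G.next d = G.deg (G.src d) := by
  rw [← card_range (minimalPeriod G.next d)]
  refine card_bij (fun n _ => G.next^[n] d) (fun n _ => ?_) (fun a ha b hb h => ?_) (fun e he => ?_)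
  · simpa using G.src_iterate_next n d
  · exact iterate_injOn_Iio_minimalPeriod (by simpa using ha) (by simpa using hb) h
  · obtain ⟨n, hn⟩ := G.next_cyclic d e (by simpa using (mem_filter.1 he).2.symm)
    refine ⟨n % minimalPeriod G.next d, mem_range.2 (Nat.mod_lt _ ?_), ?_⟩
    · exact minimalPeriod_pos_of_mem_periodicPts (G.mem_periodicPts_next d)
    · rw [iterate_mod_minimalPeriod_eq, hn]

lemma next_iterate_deg {d : G.D} {u : G.V} (hd : G.src d = u) : G.next^[G.deg u] d = d := by
  rw [← hd, ← G.minimalPeriod_next]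
  exact isPeriodicPt_minimalPeriod _ d

lemma next_iterate_injOn {d : G.D} {u : G.V} (hd : G.src d = u) :
    Set.InjOn (G.next^[·] d) (Set.Iio (G.deg u)) := by
  rw [← hd, ← G.minimalPeriod_next]
  exact iterate_injOn_Iio_minimalPeriod

lemma exists_lt_deg_next_iterate_eq {d e : G.D} {u : G.V} (hd : G.src d = u)
    (he : G.src e = u) : ∃ j < G.deg u, G.next^[j] d = e := by
  obtain ⟨n, hn⟩ := G.next_cyclic d e (hd.trans he.symm)
  rw [← hd, ← G.minimalPeriod_next]
  exact ⟨n % minimalPeriod G.next d,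
    Nat.mod_lt _ (minimalPeriod_pos_of_mem_periodicPts (G.mem_periodicPts_next d)),
    by rw [iterate_mod_minimalPeriod_eq, hn]⟩

lemma deg_le_sub_of_next_iterate_eq {d : G.D} {u : G.V} (hd : G.src d = u) {a b : ℕ}
    (hab : a < b) (h : G.next^[a] d = G.next^[b] d) : G.deg u ≤ b - a := by
  have hper : IsPeriodicPt G.next (b - a) (G.next^[a] d) := by
    rw [IsPeriodicPt, IsFixedPt, ← iterate_add_apply, Nat.sub_add_cancel hab.le, h]
  rw [← hd, ← G.minimalPeriod_next, ← minimalPeriod_apply_iterate (G.mem_periodicPts_next d) a]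
  exact hper.minimalPeriod_le (by omega)

section Trajectory

variable {G} (q : G.RotorConfig × G.V)

def chipAt (n : ℕ) : G.V := (G.rrStep^[n] q).2

def rotAt (n : ℕ) : G.RotorConfig := (G.rrStep^[n] q).1

def dartAt (n : ℕ) : G.D := G.next ((rotAt q n).1 (chipAt q n))

def visits (n : ℕ) (u : G.V) : ℕ := #((range n).filter fun i => chipAt q i = u)

lemma rotAt_succ_apply (n : ℕ) (u : G.V) :
    (rotAt q (n + 1)).1 u = if u = chipAt q n then dartAt q n else (rotAt q n).1 u := by
  simp only [rotAt, chipAt, dartAt, iterate_succ_apply']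
  rfl

lemma chipAt_succ (n : ℕ) : chipAt q (n + 1) = G.tgt (dartAt q n) := by
  simp only [rotAt, chipAt, dartAt, iterate_succ_apply']
  rfl

lemma iterate_rrStep_eq (n : ℕ) : G.rrStep^[n] q = (rotAt q n, chipAt q n) := rfl

lemma src_dartAt (n : ℕ) : G.src (dartAt q n) = chipAt q n := by
  rw [dartAt, G.src_next, (rotAt q n).2]

lemma visits_succ (n : ℕ) (u : G.V) :
    visits q (n + 1) u = visits q n u + if chipAt q n = u then 1 else 0 := by
  simp only [visits, card_filter, sum_range_succ]

lemma visits_mono {a b : ℕ} (hab : a ≤ b) (u : G.V) : visits q a u ≤ visits q b u :=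
  card_le_card (filter_subset_filter _ (range_subset_range.2 hab))

lemma visits_lt_visits {a b : ℕ} {u : G.V} (hab : a < b) (ha : chipAt q a = u) :
    visits q a u < visits q b u := by
  have := visits_mono q hab u
  rw [visits_succ, if_pos ha] at this
  omega

lemma eq_of_visits_eq {a b : ℕ} {u : G.V} (ha : chipAt q a = u) (hb : chipAt q b = u)
    (hab : visits q a u = visits q b u) : a = b := by
  rcases lt_trichotomy a b with h | h | h
  · exact absurd hab (visits_lt_visits q h ha).ne
  · exact h
  · exact absurd hab (visits_lt_visits q h hb).ne'

lemma sum_visits (n : ℕ) : ∑ u, visits q n u = n := by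
  simp only [visits]
  rw [← card_eq_sum_card_fiberwise fun i _ => mem_univ (chipAt q i), card_range]

lemma rotAt_apply (n : ℕ) (u : G.V) :
    (rotAt q n).1 u = G.next^[visits q n u] (q.1.1 u) := by
  induction n with
  | zero => rfl
  | succ n ih =>
    rw [rotAt_succ_apply, visits_succ]
    by_cases h : chipAt q n = u
    · rw [if_pos h.symm, if_pos h, dartAt, h, ih, iterate_succ_apply']
    · rw [if_neg (Ne.symm h), if_neg h, add_zero, ih]

lemma dartAt_eq (n : ℕ) :
    dartAt q n = G.next^[visits q n (chipAt q n) + 1] (q.1.1 (chipAt q n)) := by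
  rw [dartAt, rotAt_apply, iterate_succ_apply']

/-- Every visit after time `0` is an arrival along the previous dart. -/
lemma visits_succ_eq_arrivals (n : ℕ) (u : G.V) :
    visits q (n + 1) u =
      (if q.2 = u then 1 else 0) + #((range n).filter fun i => G.tgt (dartAt q i) = u) := by
  induction n with
  | zero =>
    rw [visits_succ, show visits q 0 u = 0 from rfl, range_zero, filter_empty, card_empty,
      zero_add, add_zero]
    rfl
  | succ n ih =>
    rw [visits_succ, ih, chipAt_succ, card_filter, card_filter, sum_range_succ]
    omega

lemma exists_visits_eq {n j : ℕ} {u : G.V} (hj : j < visits q n u) :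
    ∃ i < n, chipAt q i = u ∧ visits q i u = j := by
  induction n with
  | zero => simp [visits] at hj
  | succ n ih =>
    rw [visits_succ] at hj
    by_cases h : chipAt q n = u
    · rcases lt_or_ge j (visits q n u) with hlt | hge
      · obtain ⟨i, hi, hiu, hij⟩ := ih hlt
        exact ⟨i, by omega, hiu, hij⟩
      · rw [if_pos h] at hj
        exact ⟨n, by omega, h, by omega⟩
    · rw [if_neg h, add_zero] at hj
      obtain ⟨i, hi, hiu, hij⟩ := ih hj
      exact ⟨i, by omega, hiu, hij⟩

lemma deg_le_visits_of_dartAt_eq {i j : ℕ} (hij : i < j) (h : dartAt q i = dartAt q j) :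
    G.deg (chipAt q j) ≤ visits q j (chipAt q j) := by
  have hchip : chipAt q i = chipAt q j := by rw [← src_dartAt, h, src_dartAt]
  have hlt := visits_lt_visits q hij hchip
  rw [dartAt_eq, dartAt_eq, hchip] at h
  have := G.deg_le_sub_of_next_iterate_eq (q.1.2 _) (by omega) h
  omega

lemma exists_deg_le_visits : ∃ n, G.deg (chipAt q n) ≤ visits q n (chipAt q n) := by
  obtain ⟨i, j, hne, hij⟩ := Finite.exists_ne_map_eq_of_infinite (dartAt q)
  rcases lt_or_gt_of_ne hne with h | h
  · exact ⟨j, deg_le_visits_of_dartAt_eq q h hij⟩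
  · exact ⟨i, deg_le_visits_of_dartAt_eq q h hij.symm⟩

def fullTurnTime : ℕ := Nat.find (exists_deg_le_visits q)

lemma deg_le_visits_fullTurnTime :
    G.deg (chipAt q (fullTurnTime q)) ≤ visits q (fullTurnTime q) (chipAt q (fullTurnTime q)) :=
  Nat.find_spec (exists_deg_le_visits q)

lemma dartAt_injOn_fullTurnTime : Set.InjOn (dartAt q) (Set.Iio (fullTurnTime q)) := by
  intro i hi j hj h
  by_contra hne
  rcases lt_or_gt_of_ne hne with hlt | hlt
  · exact Nat.find_min _ hj (deg_le_visits_of_dartAt_eq q hlt h)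
  · exact Nat.find_min _ hi (deg_le_visits_of_dartAt_eq q hlt h.symm)

lemma card_filter_dartAt_le (P : G.D → Prop) [DecidablePred P] :
    #((range (fullTurnTime q)).filter fun i => P (dartAt q i)) ≤ #(univ.filter P) := by
  refine card_le_card_of_injOn (dartAt q) (fun i hi => ?_) fun i hi j hj h => ?_
  · simpa using (mem_filter.1 hi).2
  · exact dartAt_injOn_fullTurnTime q (by simpa using (mem_filter.1 hi).1)
      (by simpa using (mem_filter.1 hj).1) h

lemma visits_fullTurnTime_le (u : G.V) : visits q (fullTurnTime q) u ≤ G.deg u := by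
  have h := card_filter_dartAt_le q fun d => G.src d = u
  simp only [src_dartAt] at h
  exact h

lemma chipAt_fullTurnTime : chipAt q (fullTurnTime q) = q.2 := by
  have hfull := deg_le_visits_fullTurnTime q
  have harrivals := visits_succ_eq_arrivals q (fullTurnTime q) (chipAt q (fullTurnTime q))
  have hin := card_filter_dartAt_le q fun d => G.tgt d = chipAt q (fullTurnTime q)
  rw [visits_succ, if_pos rfl] at harrivals
  rw [G.card_filter_tgt_eq_deg] at hin
  by_contra hne
  rw [if_neg (Ne.symm hne)] at harrivals
  omega

lemma visits_fullTurnTime_start : visits q (fullTurnTime q) q.2 = G.deg q.2 := by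
  refine le_antisymm (visits_fullTurnTime_le q _) ?_
  rw [← chipAt_fullTurnTime q]
  exact deg_le_visits_fullTurnTime q

lemma exists_dartAt_eq_of_visits_eq_deg {u : G.V}
    (hu : visits q (fullTurnTime q) u = G.deg u) {d : G.D} (hd : G.tgt d = u) :
    ∃ i < fullTurnTime q, dartAt q i = d := by
  have hcard : #((range (fullTurnTime q)).filter fun i => G.tgt (dartAt q i) = u) =
      #(univ.filter fun d => G.tgt d = u) := by
    have harrivals := visits_succ_eq_arrivals q (fullTurnTime q) u
    rw [visits_succ, hu, chipAt_fullTurnTime] at harrivals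
    rw [G.card_filter_tgt_eq_deg]
    omega
  have himage : ((range (fullTurnTime q)).filter fun i => G.tgt (dartAt q i) = u).image
      (dartAt q) = univ.filter fun d => G.tgt d = u := by
    refine eq_of_subset_of_card_le (fun d hd => ?_) ?_
    · obtain ⟨i, hi, rfl⟩ := mem_image.1 hd
      simpa using (mem_filter.1 hi).2
    · rw [card_image_of_injOn, hcard]
      exact (dartAt_injOn_fullTurnTime q).mono fun i hi => by simpa using (mem_filter.1 hi).1
  obtain ⟨i, hi, rfl⟩ := mem_image.1 (himage ▸ mem_filter.2 ⟨mem_univ d, hd⟩)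
  exact ⟨i, by simpa using (mem_filter.1 hi).1, rfl⟩

/-- The initial rotor at `w` is the last dart at `w` that the chip would use. -/
lemma dartAt_ne_initial_rotor {w : G.V} (hw : visits q (fullTurnTime q) w < G.deg w) {i : ℕ}
    (hi : i < fullTurnTime q) : dartAt q i ≠ q.1.1 w := by
  intro h
  have hchip : chipAt q i = w := by rw [← src_dartAt, h, q.1.2]
  have hlt := visits_lt_visits q hi hchip
  rw [dartAt_eq, hchip] at h
  have := G.deg_le_sub_of_next_iterate_eq (q.1.2 w) (a := 0) (by omega) h.symm
  omega

end Trajectory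

namespace Unicycle

variable {G} {q : G.RotorConfig × G.V}

/-- Every orbit of the rotor map enters the unique cycle, which passes through the chip. -/
lemma exists_iterate_cfgStep_eq (h : G.Unicycle q) (v : G.V) :
    ∃ n, (G.cfgStep q.1)^[n] v = q.2 := by
  obtain ⟨i, j, hne, hij⟩ := Finite.exists_ne_map_eq_of_infinite ((G.cfgStep q.1)^[·] v)
  wlog hlt : i < j generalizing i j
  · exact this j i hne.symm hij.symm (lt_of_le_of_ne (not_lt.1 hlt) hne.symm)
  have hper : G.Periodic q.1 ((G.cfgStep q.1)^[i] v) :=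
    ⟨j - i, by omega, by rw [← iterate_add_apply, Nat.sub_add_cancel hlt.le]; exact hij.symm⟩
  obtain ⟨n, hn⟩ := h.2 _ _ hper h.1
  exact ⟨n + i, by rw [iterate_add_apply, hn]⟩

lemma visits_fullTurnTime (h : G.Unicycle q) (u : G.V) :
    visits q (fullTurnTime q) u = G.deg u := by
  by_contra hu
  have hclosed : ∀ n, visits q (fullTurnTime q) ((G.cfgStep q.1)^[n] u) <
      G.deg ((G.cfgStep q.1)^[n] u) := by
    intro n
    induction n with
    | zero => exact lt_of_le_of_ne (visits_fullTurnTime_le q u) hu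
    | succ n ih =>
      rw [iterate_succ_apply']
      refine lt_of_le_of_ne (visits_fullTurnTime_le q _) fun heq => ?_
      obtain ⟨i, hi, hdart⟩ := exists_dartAt_eq_of_visits_eq_deg q heq rfl
      exact dartAt_ne_initial_rotor q ih hi hdart
  obtain ⟨n, hn⟩ := h.exists_iterate_cfgStep_eq u
  have := hclosed n
  rw [hn, visits_fullTurnTime_start] at this
  exact lt_irrefl _ this

lemma fullTurnTime_eq_card (h : G.Unicycle q) : fullTurnTime q = Fintype.card G.D := by
  rw [← sum_visits q (fullTurnTime q), ← G.sum_deg]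
  exact sum_congr rfl fun u _ => h.visits_fullTurnTime u

lemma visits_card (h : G.Unicycle q) (u : G.V) : visits q (Fintype.card G.D) u = G.deg u := by
  rw [← h.fullTurnTime_eq_card, h.visits_fullTurnTime]

lemma isPeriodicPt_card (h : G.Unicycle q) : IsPeriodicPt G.rrStep (Fintype.card G.D) q := by
  refine Prod.ext (Subtype.ext (funext fun u => ?_)) ?_
  · change (rotAt q _).1 u = _
    rw [rotAt_apply, h.visits_card, G.next_iterate_deg (q.1.2 u)]
  · change chipAt q _ = _
    rw [← h.fullTurnTime_eq_card, chipAt_fullTurnTime]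

lemma exists_rotAt_eq (h : G.Unicycle q) (e : G.D) :
    ∃ i < Fintype.card G.D, chipAt q i = G.src e ∧ (rotAt q i).1 (G.src e) = e := by
  obtain ⟨j, hj, hje⟩ := G.exists_lt_deg_next_iterate_eq (q.1.2 (G.src e)) rfl
  obtain ⟨i, hi, hchip, hvis⟩ := exists_visits_eq q (j := j) (by rwa [h.visits_card])
  exact ⟨i, hi, hchip, by rw [rotAt_apply, hvis, hje]⟩

lemma eq_of_rotAt_eq (h : G.Unicycle q) {i j : ℕ} (hi : i < Fintype.card G.D)
    (hj : j < Fintype.card G.D) {u : G.V} (hiu : chipAt q i = u) (hju : chipAt q j = u)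
    (hij : (rotAt q i).1 u = (rotAt q j).1 u) : i = j := by
  refine eq_of_visits_eq q hiu hju (G.next_iterate_injOn (q.1.2 u) ?_ ?_ ?_)
  · rw [Set.mem_Iio, ← h.visits_card u]
    exact visits_lt_visits q hi hiu
  · rw [Set.mem_Iio, ← h.visits_card u]
    exact visits_lt_visits q hj hju
  · simpa only [rotAt_apply] using hij

end Unicycle

end RibbonGraph

/-- for a unicycle `(ρ, x)`, every vertex `y` and dart `e` based at
`y` determine a unique rotor configuration `σ` with `(σ, y)` reachable from
`(ρ, x)` and `σ[y] = e`. -/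
theorem reaches_unique_rotor (G : RibbonGraph) (ρ : G.RotorConfig) (x : G.V)
    (h : G.Unicycle (ρ, x)) (y : G.V) (e : G.D) (he : G.src e = y) :
    ∃! σ : G.RotorConfig, G.Reaches (ρ, x) (σ, y) ∧ σ.1 y = e := by
  subst he
  have hM := h.isPeriodicPt_card
  obtain ⟨i, hi, hchip, hrot⟩ := h.exists_rotAt_eq e
  refine ⟨RibbonGraph.rotAt (ρ, x) i, ⟨⟨i + Fintype.card G.D, by omega, ?_⟩, hrot⟩, ?_⟩
  · rw [iterate_add_apply, hM.eq, RibbonGraph.iterate_rrStep_eq, hchip]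
  rintro σ ⟨⟨n, -, hn⟩, hσ⟩
  rw [← hM.iterate_mod_apply, RibbonGraph.iterate_rrStep_eq, Prod.mk.injEq] at hn
  obtain ⟨hrot', hchip'⟩ := hn
  have hpos : 0 < Fintype.card G.D := Fintype.card_pos_iff.2 ⟨e⟩
  rw [← hrot', h.eq_of_rotAt_eq (Nat.mod_lt n hpos) hi hchip' hchip (by rw [hrot', hσ, hrot])]
end
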